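/- In a finite MTL-algebra M, every filter F is of the form ↑a for a unique idempotent element a. -/
import Mathlib


/-- An MTL-algebra: a bounded integral commutative prelinear residuated lattice.
The top element coincides with the monoid unit `1` (integrality), `⊥` plays the
role of `0`, `himp` is the residual `→`. -/
class MTL (α : Type*) extends CommMonoid α, Lattice α, BoundedOrder α where
  himp : α → α → α
  residuation : ∀ x y z : α, x * y ≤ z ↔ x ≤ himp y z
  one_eq_top : (1 : α) = ⊤
  prelinear : ∀ x y : α, himp x y ⊔ himp y x = 1

/-- An MTL-algebra is archimedean if for all `x ≤ y < 1` there is `n` with `y ^ n ≤ x`. -/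
def IsArchimedean (α : Type*) [MTL α] : Prop :=
  ∀ x y : α, x ≤ y → y < 1 → ∃ n : ℕ, y ^ n ≤ x

/-- A homomorphism of MTL-algebras: preserves `·`, `→`, `∧`, `∨`, `0` (= `⊥`) and `1`. -/
def IsMTLHom {α β : Type*} [MTL α] [MTL β] (f : α → β) : Prop :=
  (∀ x y, f (x * y) = f x * f y) ∧
  (∀ x y, f (MTL.himp x y) = MTL.himp (f x) (f y)) ∧
  (∀ x y, f (x ⊓ y) = f x ⊓ f y) ∧
  (∀ x y, f (x ⊔ y) = f x ⊔ f y) ∧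
  f ⊥ = ⊥ ∧ f 1 = 1

/-- A filter of an MTL-algebra: a submultiplicative upset containing `1`. -/
def IsMTLFilter {α : Type*} [MTL α] (F : Set α) : Prop :=
  (1 : α) ∈ F ∧ (∀ x y : α, x ∈ F → x ≤ y → y ∈ F) ∧
    (∀ x y : α, x ∈ F → y ∈ F → x * y ∈ F)

/-- A prime filter: a filter not containing `0` (= `⊥`) such that
`x ⊔ y ∈ F` implies `x ∈ F` or `y ∈ F`. -/
def IsPrimeMTLFilter {α : Type*} [MTL α] (F : Set α) : Prop :=
  IsMTLFilter F ∧ (⊥ : α) ∉ F ∧ ∀ x y : α, x ⊔ y ∈ F → x ∈ F ∨ y ∈ F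


section Aux
variable {α : Type*} [MTL α]

lemma MTL.mul_le_left (x y : α) : x * y ≤ x := by
  have hy1 : y ≤ (1 : α) := by rw [MTL.one_eq_top]; exact le_top
  have h1 : (1 : α) ≤ MTL.himp x x := (MTL.residuation 1 x x).mp (by simp)
  have := (MTL.residuation y x x).mpr (hy1.trans h1)
  simpa [mul_comm] using this

lemma MTL.pow_antitone (a : α) : Antitone fun n : ℕ => a ^ n := by
  apply antitone_nat_of_succ_le
  intro n
  rw [pow_succ]
  exact MTL.mul_le_left _ _

end Aux

/-- In a finite MTL-algebra, every filter is the principal upset of a unique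
idempotent element. -/
theorem finite_mtl_filter_eq_Ici_idempotent {α : Type*} [MTL α] [Fintype α]
    (F : Set α) (hF : IsMTLFilter F) :
    ∃! a : α, a * a = a ∧ F = Set.Ici a := by
  classical
  obtain ⟨h1F, hup, hmul⟩ := hF
  set s : Finset α := (Set.toFinite F).toFinset with hs
  set a : α := ∏ x ∈ s, x with ha
  have haF : a ∈ F := by
    refine Finset.prod_induction _ (· ∈ F) (fun x y hx hy => hmul x y hx hy) h1F ?_
    intro x hx
    exact (Set.Finite.mem_toFinset _).mp hx
  have hale : ∀ f ∈ F, a ≤ f := by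
    intro f hf
    have hfs : f ∈ s := (Set.Finite.mem_toFinset _).mpr hf
    rw [ha, ← Finset.mul_prod_erase s _ hfs]
    exact MTL.mul_le_left _ _
  -- powers of a are in F
  have hpow : ∀ n : ℕ, a ^ n ∈ F := by
    intro n
    induction n with
    | zero => simpa using h1F
    | succ n ih => rw [pow_succ]; exact hmul _ _ ih haF
  -- find stabilization
  obtain ⟨i, j, hij, heq⟩ : ∃ i j : ℕ, i < j ∧ a ^ i = a ^ j := by
    obtain ⟨i, j, hne, heq⟩ := Finite.exists_ne_map_eq_of_infinite (fun n : ℕ => a ^ n)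
    rcases hne.lt_or_gt with h | h
    · exact ⟨i, j, h, heq⟩
    · exact ⟨j, i, h, heq.symm⟩
  have hstep : a ^ (i + 1) = a ^ i := by
    have h1 : a ^ (i + 1) ≤ a ^ i := MTL.pow_antitone a (Nat.le_succ i)
    have h2 : a ^ j ≤ a ^ (i + 1) := MTL.pow_antitone a hij
    exact le_antisymm h1 (heq ▸ h2)
  have hstab : ∀ k, i ≤ k → a ^ k = a ^ i := by
    intro k hk
    induction k with
    | zero => rw [Nat.le_zero.mp hk]
    | succ k ih =>
      rcases Nat.lt_or_ge i (k + 1) with h | h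
      · have hik : i ≤ k := Nat.lt_succ_iff.mp h
        rw [pow_succ, ih hik, ← pow_succ, hstep]
      · have : i = k + 1 := le_antisymm hk h
        rw [this]
  set b : α := a ^ (i + 1) with hb
  have hbi : b = a ^ i := hstep
  have hbb : b * b = b := by
    rw [hbi, ← pow_add]
    rw [hstab (i + i) (Nat.le_add_right i i)]
  have hbF : b ∈ F := hpow _
  have hble : ∀ f ∈ F, b ≤ f := by
    intro f hf
    have : b ≤ a := by
      calc b = a ^ (i + 1) := rfl
        _ ≤ a ^ 1 := MTL.pow_antitone a (Nat.le_add_left 1 i)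
        _ = a := pow_one a
    exact this.trans (hale f hf)
  refine ⟨b, ⟨hbb, ?_⟩, ?_⟩
  · ext x
    constructor
    · intro hx; exact hble x hx
    · intro hx; exact hup b x hbF hx
  · rintro c ⟨-, hc⟩
    have h1 : c ∈ F := hc ▸ Set.self_mem_Ici
    have h2 : b ∈ Set.Ici c := hc ▸ hbF
    exact le_antisymm h2 (hble c h1)
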